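/- arXiv:1306.1513 — 3 statements merged into one kernel-verified Lean document; each statement's English description precedes it below -/
import Mathlib

section
/- Let T be a swap-closed triple tree and X, Y ∈ 2^ω. Then for every ordinal α: rk(T̂_{X,Y}) ≥ α if and only if rk(T̂_{Y,X}) ≥ α; moreover T̂_{X,Y} has an infinite branch if and only if T̂_{Y,X} does. -/
open MeasureTheory

/-- Cantor space `2^ω`. -/
abbrev Cantor : Type := ℕ → Bool

/-- Triples `(σ, s, τ)` of finite sequences: `σ, τ` Boolean-valued, `s` natural-number valued. -/
abbrev Trip : Type := List Bool × List ℕ × List Bool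

/-- A *triple tree*: a set of equal-length triples of finite sequences which is prefix-closed
(simultaneously restricting all three coordinates to a common shorter length stays in the set). -/
def IsTripleTree (T : Set Trip) : Prop :=
  (∀ p ∈ T, p.2.1.length = p.1.length ∧ p.2.2.length = p.1.length) ∧
  (∀ p ∈ T, ∀ n : ℕ, (p.1.take n, p.2.1.take n, p.2.2.take n) ∈ T)

/-- The restriction `X↾n` of `X : 2^ω` to its first `n` values, as a finite sequence. -/
def res (X : Cantor) (n : ℕ) : List Bool := (List.range n).map X

/-- `T` represents the relation `E` on Cantor space: `X E Y` iff there is `f : ℕ → ℕ`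
with `(X↾n, f↾n, Y↾n) ∈ T` for every `n`. -/
def Represents (T : Set Trip) (E : Set (Cantor × Cantor)) : Prop :=
  ∀ X Y : Cantor,
    (X, Y) ∈ E ↔ ∃ f : ℕ → ℕ, ∀ n : ℕ, (res X n, (List.range n).map f, res Y n) ∈ T

/-- A triple tree is swap-closed if `(σ, s, τ) ∈ T ↔ (τ, s, σ) ∈ T`. -/
def SwapClosed (T : Set Trip) : Prop :=
  ∀ (σ : List Bool) (s : List ℕ) (τ : List Bool), (σ, s, τ) ∈ T ↔ (τ, s, σ) ∈ T

/-- Nodes of the trees `T^k_{X,Y}`: a node of length `n` is a tuple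
`(s₁, t₁, s₂, t₂, …, t_{k-1}, s_k)` with each `sᵢ ∈ ℕ^n`, `tⱼ ∈ Bool^n`, encoded
"transposed", as a list of length `n` whose `m`-th entry collects the `m`-th values
`((s₁ m, …, s_k m), (t₁ m, …, t_{k-1} m))`. -/
abbrev KNode : Type := List (List ℕ × List Bool)

/-- The sequence `s_{i+1} ∈ ℕ^n` (for `0 ≤ i < k`) encoded in a node `u`. -/
def col1 (u : KNode) (i : ℕ) : List ℕ := u.map fun e => e.1.getD i 0

/-- The sequence `t_{j+1} ∈ Bool^n` (for `0 ≤ j < k-1`) encoded in a node `u`. -/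
def col2 (u : KNode) (j : ℕ) : List Bool := u.map fun e => e.2.getD j false

/-- The `i`-th boundary sequence (`0 ≤ i ≤ k`): `X↾n` for `i = 0`, `Y↾n` for `i = k`,
and `t_i` for `0 < i < k`. -/
def bdry (X Y : Cantor) (k : ℕ) (u : KNode) (i : ℕ) : List Bool :=
  if i = 0 then res X u.length else if i = k then res Y u.length else col2 u (i - 1)

/-- The tree `T^k_{X,Y}`: nodes of length `n` are tuples `(s₁, t₁, …, t_{k-1}, s_k)` with
`(X↾n, s₁, t₁) ∈ T`, `(t₁, s₂, t₂) ∈ T`, …, `(t_{k-1}, s_k, Y↾n) ∈ T`. -/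
def TkTree (T : Set Trip) (X Y : Cantor) (k : ℕ) : Set KNode :=
  {u | (∀ e ∈ u, e.1.length = k ∧ e.2.length = k - 1) ∧
       ∀ i < k, (bdry X Y k u i, col1 u i, bdry X Y k u (i + 1)) ∈ T}

/-- Nodes of `T̂_{X,Y}`: the root (`none`), together with pairs `(k, u)`. -/
abbrev HatNode : Type := Option (ℕ × KNode)

/-- The tree `T̂_{X,Y}`: the disjoint union of the trees `T^k_{X,Y}` (`k ≥ 1`) with all the
roots identified: the root together with all pairs `(k, u)` with `u` a nonempty node
of `T^k_{X,Y}`. -/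
def HatTree (T : Set Trip) (X Y : Cantor) : Set HatNode :=
  {p | p = none ∨ ∃ k u, p = some (k, u) ∧ 1 ≤ k ∧ u ≠ [] ∧ u ∈ TkTree T X Y k}

/-- Proper (coordinatewise) prefix order on finite sequences. -/
def ListLt {A : Type*} (u v : List A) : Prop := u <+: v ∧ u ≠ v

/-- `HatLt p q`: the node `q` of `T̂` properly extends the node `p`: every node properly
extends the root, and `(k', u')` properly extends `(k, u)` iff `k = k'` and `u` is a proper
prefix of `u'`. -/
def HatLt : HatNode → HatNode → Prop
  | none, some _ => True
  | some (k, u), some (k', u') => k = k' ∧ ListLt u u'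
  | _, none => False

/-- `RankGe S lt u α`: the rank of the node `u` in the tree `(S, lt)` is `≥ α`, defined by
transfinite recursion: for every `β < α` there is a node `v ∈ S` properly extending `u`
(i.e. `lt u v`) whose rank is `≥ β`. -/
def RankGe {A : Type*} (S : Set A) (lt : A → A → Prop) (u : A) (α : Ordinal.{0}) : Prop :=
  ∀ β : Ordinal.{0}, β < α → ∃ v, v ∈ S ∧ lt u v ∧ RankGe S lt v β
termination_by α

/-- `rk(T̂_{X,Y}) ≥ α`: the root belongs to the tree and its rank is `≥ α`. -/
def HatRankGe (T : Set Trip) (X Y : Cantor) (α : Ordinal.{0}) : Prop :=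
  none ∈ HatTree T X Y ∧ RankGe (HatTree T X Y) HatLt none α

/-- `rk(T^k_{X,Y}) ≥ α`: the root (the empty tuple) belongs to the tree and its rank is `≥ α`. -/
def TkRankGe (T : Set Trip) (X Y : Cantor) (k : ℕ) (α : Ordinal.{0}) : Prop :=
  ([] : KNode) ∈ TkTree T X Y k ∧ RankGe (TkTree T X Y k) ListLt [] α

/-- An infinite branch of a tree of `KNode`s: a sequence of nodes, one of each length `n`,
each a proper (coordinatewise) prefix of the next. -/
def HasInfBranch (S : Set KNode) : Prop :=
  ∃ g : ℕ → KNode, ∀ n : ℕ, g n ∈ S ∧ (g n).length = n ∧ ListLt (g n) (g (n + 1))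

/-- `T̂_{X,Y}` is ill-founded: it contains an infinite properly-extending chain of nodes. -/
def HatIllFounded (T : Set Trip) (X Y : Cantor) : Prop :=
  ∃ g : ℕ → HatNode, ∀ n : ℕ, g n ∈ HatTree T X Y ∧ HatLt (g n) (g (n + 1))

/-!
A chain `X↾n = t₀, s₁, t₁, …, s_k, t_k = Y↾n` of `T̂_{X,Y}`, read backwards, is by swap-closure
a chain `Y↾n = t_k, s_k, …, s₁, t₀ = X↾n` of `T̂_{Y,X}` with the same `k` and `n`. Reversing the
tuples at every node therefore maps `T̂_{X,Y}` into `T̂_{Y,X}` and preserves proper extension,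
so it carries ranks and infinite branches from one tree to the other; by symmetry the
converse holds as well.
-/

def reverseChain (u : KNode) : KNode := u.map fun e => (e.1.reverse, e.2.reverse)

lemma reverseChain_involutive : Function.Involutive reverseChain :=
  List.map_involutive_iff.2 fun e => by simp

lemma length_reverseChain (u : KNode) : (reverseChain u).length = u.length :=
  List.length_map _

lemma col1_reverseChain {u : KNode} {k : ℕ} (hu : ∀ e ∈ u, e.1.length = k) {i : ℕ}
    (hi : i < k) : col1 (reverseChain u) i = col1 u (k - 1 - i) := by
  simp only [col1, reverseChain, List.map_map]
  refine List.map_congr_left fun e he => ?_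
  simp only [Function.comp, List.getD_reverse i (hu e he ▸ hi), hu e he]

lemma col2_reverseChain {u : KNode} {k : ℕ} (hu : ∀ e ∈ u, e.2.length = k - 1) {j : ℕ}
    (hj : j < k - 1) : col2 (reverseChain u) j = col2 u (k - 2 - j) := by
  simp only [col2, reverseChain, List.map_map]
  refine List.map_congr_left fun e he => ?_
  simp only [Function.comp, List.getD_reverse j (hu e he ▸ hj), hu e he,
    show k - 1 - 1 - j = k - 2 - j by omega]

lemma bdry_reverseChain {X Y : Cantor} {u : KNode} {k : ℕ} (hk : 0 < k)
    (hu : ∀ e ∈ u, e.2.length = k - 1) {i : ℕ} (hi : i ≤ k) :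
    bdry Y X k (reverseChain u) i = bdry X Y k u (k - i) := by
  simp only [bdry, length_reverseChain]
  split_ifs <;> try omega
  all_goals first
    | rfl
    | rw [col2_reverseChain hu (by omega)]; congr 1; omega

lemma reverseChain_mem_tkTree {T : Set Trip} (hswap : SwapClosed T) {X Y : Cantor} {k : ℕ}
    {u : KNode} (hu : u ∈ TkTree T X Y k) : reverseChain u ∈ TkTree T Y X k := by
  obtain ⟨hlen, hlinks⟩ := hu
  refine ⟨fun _ hmem => ?_, fun i hi => ?_⟩
  · obtain ⟨e, he, rfl⟩ := List.mem_map.1 hmem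
    simpa using hlen e he
  · have hk : 0 < k := by omega
    have hlen₂ : ∀ e ∈ u, e.2.length = k - 1 := fun e he => (hlen e he).2
    rw [bdry_reverseChain hk hlen₂ hi.le, bdry_reverseChain hk hlen₂ (i := i + 1) hi,
      col1_reverseChain (fun e he => (hlen e he).1) hi, hswap,
      show k - (i + 1) = k - 1 - i by omega, ← show k - 1 - i + 1 = k - i by omega]
    exact hlinks (k - 1 - i) (by omega)

lemma ListLt.reverseChain {u v : KNode} (h : ListLt u v) :
    ListLt (reverseChain u) (reverseChain v) :=
  ⟨h.1.map _, reverseChain_involutive.injective.ne h.2⟩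

def hatReverse : HatNode → HatNode
  | none => none
  | some (k, u) => some (k, reverseChain u)

lemma hatReverse_mem_hatTree {T : Set Trip} (hswap : SwapClosed T) {X Y : Cantor} {p : HatNode}
    (hp : p ∈ HatTree T X Y) : hatReverse p ∈ HatTree T Y X := by
  rcases hp with rfl | ⟨k, u, rfl, hk, hne, hu⟩
  · exact Or.inl rfl
  · refine Or.inr ⟨k, reverseChain u, rfl, hk, ?_, reverseChain_mem_tkTree hswap hu⟩
    simpa [reverseChain] using hne

lemma HatLt.hatReverse : ∀ {p q : HatNode}, HatLt p q → HatLt (hatReverse p) (hatReverse q)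
  | none, some _, _ => trivial
  | some _, some _, ⟨hk, hu⟩ => ⟨hk, hu.reverseChain⟩

lemma RankGe.map {A B : Type*} {S : Set A} {S' : Set B} {lt : A → A → Prop}
    {lt' : B → B → Prop} {f : A → B} (hS : Set.MapsTo f S S')
    (hlt : ∀ ⦃u v⦄, lt u v → lt' (f u) (f v)) {u : A} {α : Ordinal.{0}}
    (h : RankGe S lt u α) : RankGe S' lt' (f u) α := by
  induction α using WellFoundedLT.induction generalizing u with
  | _ α ih =>
    rw [RankGe] at h ⊢
    intro β hβ
    obtain ⟨v, hv, huv, hrank⟩ := h β hβ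
    exact ⟨f v, hS hv, hlt huv, ih β hβ hrank⟩

lemma HatRankGe.swap {T : Set Trip} (hswap : SwapClosed T) {X Y : Cantor} {α : Ordinal.{0}}
    (h : HatRankGe T X Y α) : HatRankGe T Y X α :=
  ⟨Or.inl rfl, h.2.map (fun _ hp => hatReverse_mem_hatTree hswap hp) fun _ _ => HatLt.hatReverse⟩

lemma HatIllFounded.swap {T : Set Trip} (hswap : SwapClosed T) {X Y : Cantor}
    (h : HatIllFounded T X Y) : HatIllFounded T Y X :=
  let ⟨g, hg⟩ := h
  ⟨hatReverse ∘ g, fun n => ⟨hatReverse_mem_hatTree hswap (hg n).1, (hg n).2.hatReverse⟩⟩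

theorem statement3_general (T : Set Trip) (hswap : SwapClosed T)
    (X Y : Cantor) :
    (∀ α : Ordinal.{0}, HatRankGe T X Y α ↔ HatRankGe T Y X α) ∧
    (HatIllFounded T X Y ↔ HatIllFounded T Y X) :=
  ⟨fun _ => ⟨HatRankGe.swap hswap, HatRankGe.swap hswap⟩,
    ⟨HatIllFounded.swap hswap, HatIllFounded.swap hswap⟩⟩

/-- For a swap-closed triple tree `T` and `X, Y ∈ 2^ω`: for every ordinal
`α`, `rk(T̂_{X,Y}) ≥ α` iff `rk(T̂_{Y,X}) ≥ α`; moreover `T̂_{X,Y}` has an infinite branch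
iff `T̂_{Y,X}` does. -/
theorem statement3 (T : Set Trip) (hT : IsTripleTree T) (hswap : SwapClosed T)
    (X Y : Cantor) :
    (∀ α : Ordinal.{0}, HatRankGe T X Y α ↔ HatRankGe T Y X α) ∧
    (HatIllFounded T X Y ↔ HatIllFounded T Y X) :=
  statement3_general T hswap X Y
end

section
/- Let T be a triple tree, X, Y, Z ∈ 2^ω, k, l ≥ 1, and β an ordinal. If rk(T^k_{X,Y}) ≥ β and rk(T^l_{Y,Z}) ≥ β, then rk(T^{k+l}_{X,Z}) ≥ β. -/
open MeasureTheory

/-!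
Induction on `β`, simultaneously for all nodes `u ∈ T^k_{X,Y}` and `v ∈ T^l_{Y,Z}` of equal
length `n`: gluing them with `Y↾n` as the new middle Boolean sequence gives a node of
`T^{k+l}_{X,Z}` whose rank is at least `β` when both their ranks are. Since the trees are
prefix-closed, rank witnesses can be taken one level up, so one-step extensions of `u` and `v`
glue to a one-step extension of the glued node.
-/

lemma ListLt.length_lt {A : Type*} {u v : List A} (h : ListLt u v) : u.length < v.length :=
  h.1.length_le.lt_of_ne fun hlen => h.2 (h.1.eq_of_length hlen)

lemma ListLt.of_isPrefix_of_length_lt {A : Type*} {u v : List A} (h : u <+: v)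
    (hlen : u.length < v.length) : ListLt u v :=
  ⟨h, fun huv => hlen.ne (congrArg List.length huv)⟩

section RankGe

variable {A : Type*} {S : Set (List A)}

lemma RankGe.of_isPrefix {u u' : List A} (h : u <+: u') {γ : Ordinal.{0}}
    (hr : RankGe S ListLt u' γ) : RankGe S ListLt u γ := by
  rw [RankGe] at hr ⊢
  intro β hβ
  obtain ⟨v, hvS, hlt, hv⟩ := hr β hβ
  exact ⟨v, hvS, .of_isPrefix_of_length_lt (h.trans hlt.1)
    (h.length_le.trans_lt hlt.length_lt), hv⟩

lemma RankGe.exists_append_singleton (hS : ∀ u ∈ S, ∀ n, u.take n ∈ S) {u : List A}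
    {β γ : Ordinal.{0}} (hr : RankGe S ListLt u β) (hγ : γ < β) :
    ∃ a, u ++ [a] ∈ S ∧ RankGe S ListLt (u ++ [a]) γ := by
  rw [RankGe] at hr
  obtain ⟨v, hvS, hlt, hv⟩ := hr γ hγ
  have hlen := hlt.length_lt
  have hv_take : v.take (u.length + 1) = u ++ [v[u.length]] := by
    rw [← List.take_append_getElem hlen, ← List.prefix_iff_eq_take.1 hlt.1]
  refine ⟨v[u.length], hv_take ▸ hS v hvS _, ?_⟩
  rw [← hv_take]
  exact hv.of_isPrefix (List.take_prefix _ _)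

end RankGe

/-- In the transposed encoding of `KNode`: glues `(s₁, t₁, …, s_k)` and `(s'₁, t'₁, …, s'_l)`
into `(s₁, t₁, …, s_k, Y↾n, s'₁, t'₁, …, s'_l)`. -/
def glue (Y : Cantor) (u v : KNode) : KNode :=
  (u.zip v).mapIdx fun m p => (p.1.1 ++ p.2.1, p.1.2 ++ Y m :: p.2.2)

section Glue

variable {Y : Cantor} {u v : KNode}

lemma length_glue (huv : u.length = v.length) : (glue Y u v).length = u.length := by
  simp [glue, huv]

lemma glue_append_singleton (huv : u.length = v.length) (a c : List ℕ × List Bool) :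
    glue Y (u ++ [a]) (v ++ [c]) = glue Y u v ++ [(a.1 ++ c.1, a.2 ++ Y u.length :: c.2)] := by
  simp [glue, List.zip_append huv, huv]

lemma exists_of_mem_glue {e : List ℕ × List Bool} (he : e ∈ glue Y u v) :
    ∃ a ∈ u, ∃ c ∈ v, ∃ b, e = (a.1 ++ c.1, a.2 ++ b :: c.2) := by
  obtain ⟨m, hm, rfl⟩ := List.mem_mapIdx.1 he
  have hp := List.of_mem_zip (List.getElem_mem hm)
  exact ⟨_, hp.1, _, hp.2, _, rfl⟩

lemma col1_glue_of_lt {n i : ℕ} (hu : ∀ e ∈ u, e.1.length = n) (huv : u.length = v.length)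
    (hi : i < n) : col1 (glue Y u v) i = col1 u i := by
  refine List.ext_getElem (by simp [col1, glue, huv]) fun m h₁ h₂ => ?_
  simp only [col1, glue, List.getElem_map, List.getElem_mapIdx, List.getElem_zip]
  exact List.getD_append _ _ _ _ (by rw [hu _ (List.getElem_mem _)]; exact hi)

lemma col1_glue_of_le {n i : ℕ} (hu : ∀ e ∈ u, e.1.length = n) (huv : u.length = v.length)
    (hi : n ≤ i) : col1 (glue Y u v) i = col1 v (i - n) := by
  refine List.ext_getElem (by simp [col1, glue, huv]) fun m h₁ h₂ => ?_
  simp only [col1, glue, List.getElem_map, List.getElem_mapIdx, List.getElem_zip]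
  rw [List.getD_append_right _ _ _ _ (by rw [hu _ (List.getElem_mem _)]; exact hi),
    hu _ (List.getElem_mem _)]

lemma col2_glue_of_lt {n j : ℕ} (hu : ∀ e ∈ u, e.2.length = n) (huv : u.length = v.length)
    (hj : j < n) : col2 (glue Y u v) j = col2 u j := by
  refine List.ext_getElem (by simp [col2, glue, huv]) fun m h₁ h₂ => ?_
  simp only [col2, glue, List.getElem_map, List.getElem_mapIdx, List.getElem_zip]
  exact List.getD_append _ _ _ _ (by rw [hu _ (List.getElem_mem _)]; exact hj)

lemma col2_glue_self {n : ℕ} (hu : ∀ e ∈ u, e.2.length = n) (huv : u.length = v.length) :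
    col2 (glue Y u v) n = res Y u.length := by
  refine List.ext_getElem (by simp [col2, glue, res, huv]) fun m h₁ h₂ => ?_
  simp only [col2, glue, res, List.getElem_map, List.getElem_mapIdx, List.getElem_zip,
    List.getElem_range]
  rw [List.getD_append_right _ _ _ _ (by rw [hu _ (List.getElem_mem _)]),
    hu _ (List.getElem_mem _), Nat.sub_self, List.getD_cons_zero]

lemma col2_glue_of_gt {n j : ℕ} (hu : ∀ e ∈ u, e.2.length = n) (huv : u.length = v.length)
    (hj : n < j) : col2 (glue Y u v) j = col2 v (j - n - 1) := by
  obtain ⟨d, rfl⟩ := Nat.exists_eq_add_of_lt hj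
  rw [show n + d + 1 - n - 1 = d by omega]
  refine List.ext_getElem (by simp [col2, glue, huv]) fun m h₁ h₂ => ?_
  simp only [col2, glue, List.getElem_map, List.getElem_mapIdx, List.getElem_zip]
  rw [List.getD_append_right _ _ _ _ (by rw [hu _ (List.getElem_mem _)]; omega),
    hu _ (List.getElem_mem _), show n + d + 1 - n = d + 1 by omega, List.getD_cons_succ]

end Glue

section Bdry

variable {X Y Z : Cantor} {k l i : ℕ} {u v : KNode}

lemma bdry_glue_of_le (hl : 1 ≤ l) (hu : ∀ e ∈ u, e.2.length = k - 1)
    (huv : u.length = v.length) (hi : i ≤ k) :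
    bdry X Z (k + l) (glue Y u v) i = bdry X Y k u i := by
  simp only [bdry, length_glue huv]
  split_ifs <;> try omega
  · rfl
  · rw [show i - 1 = k - 1 by omega, col2_glue_self hu huv]
  · exact col2_glue_of_lt hu huv (by omega)

lemma bdry_glue_of_ge (hk : 1 ≤ k) (hl : 1 ≤ l) (hu : ∀ e ∈ u, e.2.length = k - 1)
    (huv : u.length = v.length) (hi : k ≤ i) :
    bdry X Z (k + l) (glue Y u v) i = bdry Y Z l v (i - k) := by
  simp only [bdry, length_glue huv]
  split_ifs <;> try omega
  · rw [huv]
  · rw [show i - 1 = k - 1 by omega, col2_glue_self hu huv, huv]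
  · rw [col2_glue_of_gt hu huv (by omega), show i - 1 - (k - 1) - 1 = i - k - 1 by omega]

end Bdry

lemma res_take (X : Cantor) (n m : ℕ) : (res X m).take n = res X (min n m) := by
  simp [res, ← List.map_take, List.take_range]

section TkTree

variable {T : Set Trip} {X Y Z : Cantor} {k l : ℕ}

lemma bdry_take (u : KNode) (n i : ℕ) :
    bdry X Y k (u.take n) i = (bdry X Y k u i).take n := by
  unfold bdry col2
  split_ifs <;> simp [res_take, List.map_take]

lemma take_mem_tkTree (hT : IsTripleTree T) {u : KNode} (hu : u ∈ TkTree T X Y k) (n : ℕ) :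
    u.take n ∈ TkTree T X Y k := by
  refine ⟨fun e he => hu.1 e (List.mem_of_mem_take he), fun i hi => ?_⟩
  simpa [bdry_take, col1, List.map_take] using hT.2 _ (hu.2 i hi) n

lemma glue_mem_tkTree (hk : 1 ≤ k) (hl : 1 ≤ l) {u v : KNode} (hu : u ∈ TkTree T X Y k)
    (hv : v ∈ TkTree T Y Z l) (huv : u.length = v.length) :
    glue Y u v ∈ TkTree T X Z (k + l) := by
  have hu₁ : ∀ e ∈ u, e.1.length = k := fun e he => (hu.1 e he).1
  have hu₂ : ∀ e ∈ u, e.2.length = k - 1 := fun e he => (hu.1 e he).2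
  refine ⟨fun e he => ?_, fun i hi => ?_⟩
  · obtain ⟨a, ha, c, hc, b, rfl⟩ := exists_of_mem_glue he
    obtain ⟨ha₁, ha₂⟩ := hu.1 a ha
    obtain ⟨hc₁, hc₂⟩ := hv.1 c hc
    refine ⟨by simp [ha₁, hc₁], ?_⟩
    simp only [List.length_append, List.length_cons, ha₂, hc₂]
    omega
  · rcases lt_or_ge i k with hik | hki
    · rw [bdry_glue_of_le hl hu₂ huv hik.le, bdry_glue_of_le hl hu₂ huv hik,
        col1_glue_of_lt hu₁ huv hik]
      exact hu.2 i hik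
    · rw [bdry_glue_of_ge hk hl hu₂ huv hki, bdry_glue_of_ge hk hl hu₂ huv (by omega),
        col1_glue_of_le hu₁ huv hki, show i + 1 - k = i - k + 1 by omega]
      exact hv.2 (i - k) (by omega)

lemma rankGe_glue (hT : IsTripleTree T) (hk : 1 ≤ k) (hl : 1 ≤ l) {β : Ordinal.{0}}
    {u v : KNode} (hu : u ∈ TkTree T X Y k) (hv : v ∈ TkTree T Y Z l)
    (huv : u.length = v.length) (hru : RankGe (TkTree T X Y k) ListLt u β)
    (hrv : RankGe (TkTree T Y Z l) ListLt v β) :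
    RankGe (TkTree T X Z (k + l)) ListLt (glue Y u v) β := by
  induction β using WellFoundedLT.induction generalizing u v with
  | _ β ih =>
    rw [RankGe]
    intro γ hγ
    obtain ⟨a, hua, hra⟩ := hru.exists_append_singleton (fun _ h => take_mem_tkTree hT h) hγ
    obtain ⟨c, hvc, hrc⟩ := hrv.exists_append_singleton (fun _ h => take_mem_tkTree hT h) hγ
    have huv' : (u ++ [a]).length = (v ++ [c]).length := by simp [huv]
    refine ⟨_, glue_mem_tkTree hk hl hua hvc huv', ?_, ih γ hγ hua hvc huv' hra hrc⟩
    rw [glue_append_singleton huv]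
    exact .of_isPrefix_of_length_lt (List.prefix_append _ _) (by simp)

end TkTree

/-- For a triple tree `T`, `X, Y, Z ∈ 2^ω`, `k, l ≥ 1` and an ordinal `β`:
if `rk(T^k_{X,Y}) ≥ β` and `rk(T^l_{Y,Z}) ≥ β`, then `rk(T^{k+l}_{X,Z}) ≥ β`. -/
theorem statement8 (T : Set Trip) (hT : IsTripleTree T) (X Y Z : Cantor) (k l : ℕ)
    (hk : 1 ≤ k) (hl : 1 ≤ l) (β : Ordinal.{0})
    (h1 : TkRankGe T X Y k β) (h2 : TkRankGe T Y Z l β) :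
    TkRankGe T X Z (k + l) β := by
  have hnil : glue Y [] [] = [] := rfl
  obtain ⟨hmem1, hr1⟩ := h1
  obtain ⟨hmem2, hr2⟩ := h2
  exact ⟨hnil ▸ glue_mem_tkTree hk hl hmem1 hmem2 rfl,
    hnil ▸ rankGe_glue hT hk hl hmem1 hmem2 rfl hr1 hr2⟩
end

section
/- Consider the space (ℕ × ℕ) → Bool of codes of binary relations on ℕ (with the product topology), and say that X codes a well-order if the relation R_X := {(m, n) : X(m, n) = true} is a linear order on all of ℕ that is well-founded. Define the relation E_{ω₁} by: X E_{ω₁} Y iff either (neither X nor Y codes a well-order) or (both X and Y code well-orders and R_X is order-isomorphic to R_Y). Then E_{ω₁} is an equivalence relation, it is an analytic subset of ((ℕ × ℕ) → Bool) × ((ℕ × ℕ) → Bool), and the set of its equivalence classes (the quotient) has cardinality exactly ℵ₁. -/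
open MeasureTheory

/-- Codes of binary relations on `ℕ`. -/
abbrev RelCode : Type := (ℕ × ℕ) → Bool

/-- The binary relation `R_X` on `ℕ` coded by `X`. -/
def relOf (X : RelCode) : ℕ → ℕ → Prop := fun m n => X (m, n) = true

/-- `X` codes a well-order: `R_X` is a linear order on all of `ℕ` such that every nonempty
subset of `ℕ` has an `R_X`-least element. -/
def CodesWO (X : RelCode) : Prop :=
  IsLinearOrder ℕ (relOf X) ∧ ∀ S : Set ℕ, S.Nonempty → ∃ m ∈ S, ∀ n ∈ S, relOf X m n

/-- `R_X` and `R_Y` are order-isomorphic: some bijection of `ℕ` with itself carries one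
onto the other. -/
def OrderIsoCodes (X Y : RelCode) : Prop :=
  ∃ e : ℕ ≃ ℕ, ∀ m n : ℕ, relOf X m n ↔ relOf Y (e m) (e n)

/-- The relation `E_{ω₁}`: `X E_{ω₁} Y` iff either neither `X` nor `Y` codes a well-order,
or both do and `R_X` is order-isomorphic to `R_Y`. -/
def Eomega1 : Set (RelCode × RelCode) :=
  {p | (¬ CodesWO p.1 ∧ ¬ CodesWO p.2) ∨
       (CodesWO p.1 ∧ CodesWO p.2 ∧ OrderIsoCodes p.1 p.2)}

/-!
The order type, with the junk value `0` for codes of non-well-orders, is a complete invariant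
for `E_{ω₁}`. Hence `E_{ω₁}` is an equivalence relation whose classes correspond to the countable
ordinals `≥ ω` together with one extra class, which makes `ℵ₁` classes.

For analyticity, split `E_{ω₁}` into pairs of non-well-orders and pairs of isomorphic linear
orders; isomorphism of linear orders preserves being a well-order. Each part is the projection of
a Borel set: a code fails to be a well-order iff it is not linear or some nonempty subset of `ℕ`
has no least element, and an isomorphism is a pair of mutually inverse points of Baire space.
-/

open Set Ordinal Cardinal

section Order

variable {α : Type*} {r : α → α → Prop}

theorem isLinearOrder_iff :
    IsLinearOrder α r ↔ (∀ a, r a a) ∧ (∀ a b c, r a b → r b c → r a c) ∧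
      (∀ a b, r a b → r b a → a = b) ∧ ∀ a b, r a b ∨ r b a :=
  ⟨fun _ => ⟨refl_of r, fun _ _ _ => trans_of r, fun _ _ => antisymm_of r, total_of r⟩,
    fun ⟨h₁, h₂, h₃, h₄⟩ => { refl := h₁, trans := h₂, antisymm := h₃, total := h₄ }⟩

theorem isWellOrder_not_flip [IsLinearOrder α r]
    (h : ∀ S : Set α, S.Nonempty → ∃ m ∈ S, ∀ n ∈ S, r m n) :
    IsWellOrder α fun a b => ¬ r b a where
  trichotomous _ _ hab hba := antisymm_of r (not_not.1 hba) (not_not.1 hab)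
  wf := WellFounded.wellFounded_iff_has_min.2 fun S hS => by
    obtain ⟨m, hm, hmin⟩ := h S hS
    exact ⟨m, hm, fun n hn => not_not.2 (hmin n hn)⟩

end Order

theorem MeasureTheory.AnalyticSet.union {α : Type*} [TopologicalSpace α] {s t : Set α}
    (hs : AnalyticSet s) (ht : AnalyticSet t) : AnalyticSet (s ∪ t) := by
  rw [union_eq_iUnion]
  exact AnalyticSet.iUnion (Bool.forall_bool.2 ⟨ht, hs⟩)

theorem measurable_apply_apply {ι β : Type*} [MeasurableSpace ι] [MeasurableSpace β] [Countable ι]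
    [MeasurableSingletonClass ι] : Measurable fun p : (ι → β) × ι => p.1 p.2 :=
  measurable_from_prod_countable_left fun i => measurable_pi_apply i

theorem Measurable.apply_apply {α ι β : Type*} [MeasurableSpace α] [MeasurableSpace ι]
    [MeasurableSpace β] [Countable ι] [MeasurableSingletonClass ι] {f : α → ι → β} {g : α → ι}
    (hf : Measurable f) (hg : Measurable g) : Measurable fun a => f a (g a) :=
  measurable_apply_apply.comp (hf.prodMk hg)

theorem Cardinal.lift_mk_quot_ker {α : Type u} {β : Type v} (f : α → β) :
    lift.{v} #(Quot fun a b => f a = f b) = lift.{u} #(range f) :=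
  lift_mk_eq'.2 ⟨Setoid.quotientKerEquivRange f⟩

section Codes

variable {X Y : RelCode}

theorem OrderIsoCodes.symm : OrderIsoCodes X Y → OrderIsoCodes Y X
  | ⟨e, he⟩ => ⟨e.symm, fun m n => by simpa using (he (e.symm m) (e.symm n)).symm⟩

theorem CodesWO.of_orderIsoCodes (hX : CodesWO X) (hXY : OrderIsoCodes X Y) : CodesWO Y := by
  obtain ⟨e, he⟩ := hXY.symm
  have hY : relOf Y = e ⁻¹'o relOf X := funext₂ fun m n => propext (he m n)
  have := hX.1
  refine ⟨hY ▸ (RelEmbedding.preimage e.toEmbedding (relOf X)).isLinearOrder, fun S hS => ?_⟩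
  obtain ⟨_, ⟨a, ha, rfl⟩, hmin⟩ := hX.2 (e '' S) (hS.image e)
  exact ⟨a, ha, fun n hn => (he a n).2 (hmin (e n) (mem_image_of_mem e hn))⟩

/-- The strict part of `R_X` when `R_X` is total. Negating the flipped relation, rather than
adding `m ≠ n`, makes `orderIsoCodes_iff_nonempty_relIso` hold for arbitrary codes. -/
def ltOf (X : RelCode) : ℕ → ℕ → Prop := fun m n => ¬ relOf X n m

theorem CodesWO.isWellOrder (h : CodesWO X) : IsWellOrder ℕ (ltOf X) :=
  have := h.1
  isWellOrder_not_flip h.2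

theorem orderIsoCodes_iff_nonempty_relIso :
    OrderIsoCodes X Y ↔ Nonempty (ltOf X ≃r ltOf Y) :=
  ⟨fun ⟨e, he⟩ => ⟨⟨e, fun {a b} => (he b a).not.symm⟩⟩, fun ⟨f⟩ =>
    ⟨f.toEquiv, fun m n => by simpa [ltOf] using (f.map_rel_iff (a := n) (b := m)).not.symm⟩⟩

open Classical in
/-- The order type of `R_X`, with the junk value `0` when `X` does not code a well-order;
genuine order types are nonzero since `ℕ` is nonempty. -/
noncomputable def orderType (X : RelCode) : Ordinal.{0} :=
  if h : CodesWO X then @type ℕ (ltOf X) h.isWellOrder else 0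

theorem orderType_of_codesWO (h : CodesWO X) : orderType X = @type ℕ (ltOf X) h.isWellOrder :=
  dif_pos h

theorem orderType_eq_zero_iff : orderType X = 0 ↔ ¬ CodesWO X := by
  by_cases h : CodesWO X
  · have := h.isWellOrder
    simp [orderType_of_codesWO h, h]
  · simp [orderType, h]

theorem orderType_eq_orderType_iff : orderType X = orderType Y ↔ (X, Y) ∈ Eomega1 := by
  by_cases hX : CodesWO X <;> by_cases hY : CodesWO Y
  · have := hX.isWellOrder
    have := hY.isWellOrder
    simp [Eomega1, hX, hY, orderType_of_codesWO, type_eq, orderIsoCodes_iff_nonempty_relIso]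
  · simp [Eomega1, hX, hY, orderType_eq_zero_iff.2 hY, orderType_eq_zero_iff]
  · simp [Eomega1, hX, hY, orderType_eq_zero_iff.2 hX, eq_comm (a := (0 : Ordinal)),
      orderType_eq_zero_iff]
  · simp [Eomega1, hX, hY, orderType_eq_zero_iff.2 hX, orderType_eq_zero_iff.2 hY]

theorem orderType_lt_omega_one (X : RelCode) : orderType X < ω₁ := by
  by_cases h : CodesWO X
  · have := h.isWellOrder
    rw [orderType_of_codesWO h, ← ord_aleph, lt_ord, card_type, mk_nat]
    exact aleph0_lt_aleph_one
  · simpa [orderType_eq_zero_iff.2 h] using omega_pos 1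

end Codes

section Realization

variable {α : Type} [LinearOrder α] (e : ℕ ≃ α)

def codeOf : RelCode := fun p => decide (e p.1 ≤ e p.2)

theorem relOf_codeOf : relOf (codeOf e) = e ⁻¹'o (· ≤ ·) := by
  ext m n
  simp [relOf, codeOf]

variable [WellFoundedLT α]

theorem codesWO_codeOf : CodesWO (codeOf e) := by
  refine ⟨relOf_codeOf e ▸ (RelEmbedding.preimage e.toEmbedding (· ≤ ·)).isLinearOrder,
    fun S hS => ?_⟩
  obtain ⟨_, ⟨m, hm, rfl⟩, hmin⟩ := wellFounded_lt.has_min (e '' S) (hS.image e)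
  exact ⟨m, hm, fun n hn => by
    simpa [relOf_codeOf] using not_lt.1 (hmin (e n) (mem_image_of_mem e hn))⟩

theorem orderType_codeOf : orderType (codeOf e) = typeLT α := by
  have := (codesWO_codeOf e).isWellOrder
  rw [orderType_of_codesWO (codesWO_codeOf e), type_eq]
  exact ⟨⟨e, by simp [ltOf, relOf_codeOf]⟩⟩

end Realization

theorem mem_range_orderType {o : Ordinal.{0}} (h₁ : ω ≤ o) (h₂ : o < ω₁) :
    o ∈ range orderType := by
  have hcard : #ℕ = #o.ToType := by
    rw [mk_nat, mk_toType]
    exact le_antisymm (aleph0_le_card.2 h₁) (lt_aleph_one_iff.1 (by rwa [← lt_ord, ord_aleph]))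
  obtain ⟨e⟩ := Cardinal.eq.1 hcard
  exact ⟨codeOf e, (orderType_codeOf e).trans (type_toType o)⟩

theorem mk_range_orderType : #(range orderType) = ℵ₁ := by
  have hIio : #(Iio ω₁) = ℵ₁ := by simp [Cardinal.mk_Iio_ordinal, card_omega]
  refine le_antisymm (hIio ▸ mk_le_mk_of_subset (range_subset_iff.2 orderType_lt_omega_one)) ?_
  calc ℵ₁ = #(Iio ω₁) := hIio.symm
    _ = #((ω + ·) '' Iio ω₁) := (mk_image_eq (add_right_injective ω)).symm
    _ ≤ #(range orderType) := mk_le_mk_of_subset <| image_subset_iff.2 fun o ho =>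
        mem_range_orderType le_self_add (isPrincipal_add_omega 1 omega0_lt_omega_one ho)

theorem measurable_isLinearOrder_relOf :
    Measurable fun X : RelCode => IsLinearOrder ℕ (relOf X) := by
  simp only [isLinearOrder_iff, relOf]
  measurability

/-- `s` is the indicator of a nonempty set with no `R_X`-least element (or `R_X` is not linear). -/
def NotWOWitness : Set (RelCode × (ℕ → Bool)) :=
  {γ | ¬ IsLinearOrder ℕ (relOf γ.1) ∨
    ((∃ k, γ.2 k = true) ∧ ∀ m, γ.2 m = true → ∃ n, γ.2 n = true ∧ γ.1 (m, n) = false)}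

theorem measurableSet_notWOWitness : MeasurableSet NotWOWitness := by
  have : Measurable fun γ : RelCode × (ℕ → Bool) => IsLinearOrder ℕ (relOf γ.1) :=
    measurable_isLinearOrder_relOf.comp measurable_fst
  unfold NotWOWitness
  measurability

theorem not_codesWO_iff_exists {X : RelCode} :
    ¬ CodesWO X ↔ ∃ s : ℕ → Bool, (X, s) ∈ NotWOWitness := by
  constructor
  · intro h
    by_cases hLO : IsLinearOrder ℕ (relOf X)
    · obtain ⟨S, ⟨k, hk⟩, hS⟩ : ∃ S : Set ℕ, S.Nonempty ∧ ∀ m ∈ S, ∃ n ∈ S, ¬ relOf X m n := by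
        simpa [CodesWO, hLO] using h
      classical
      refine ⟨fun n => decide (n ∈ S), Or.inr ⟨⟨k, by simpa using hk⟩, fun m hm => ?_⟩⟩
      simpa [relOf] using hS m (by simpa using hm)
    · exact ⟨fun _ => false, Or.inl hLO⟩
  · rintro ⟨s, hLO | ⟨⟨k, hk⟩, hs⟩⟩ ⟨hLO', hleast⟩
    · exact hLO hLO'
    · obtain ⟨m, hm, hmin⟩ := hleast {n | s n = true} ⟨k, hk⟩
      obtain ⟨n, hn, hmn⟩ := hs m hm
      exact Bool.false_ne_true (hmn.symm.trans (hmin n hn))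

theorem fst_image_notWOWitness : Prod.fst '' NotWOWitness = {X | ¬ CodesWO X} := by
  ext X
  simp [not_codesWO_iff_exists]

def IsoWitness : Set ((RelCode × RelCode) × ((ℕ → ℕ) × (ℕ → ℕ))) :=
  {γ | IsLinearOrder ℕ (relOf γ.1.1) ∧ (∀ n, γ.2.2 (γ.2.1 n) = n) ∧ (∀ n, γ.2.1 (γ.2.2 n) = n) ∧
    ∀ m n, γ.1.1 (m, n) = γ.1.2 (γ.2.1 m, γ.2.1 n)}

theorem measurableSet_isoWitness : MeasurableSet IsoWitness := by
  have : Measurable fun γ : (RelCode × RelCode) × ((ℕ → ℕ) × (ℕ → ℕ)) =>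
      IsLinearOrder ℕ (relOf γ.1.1) :=
    measurable_isLinearOrder_relOf.comp (by fun_prop)
  have : ∀ n, Measurable fun γ : (RelCode × RelCode) × ((ℕ → ℕ) × (ℕ → ℕ)) => γ.2.2 (γ.2.1 n) :=
    fun n => Measurable.apply_apply (by fun_prop) (by fun_prop)
  have : ∀ n, Measurable fun γ : (RelCode × RelCode) × ((ℕ → ℕ) × (ℕ → ℕ)) => γ.2.1 (γ.2.2 n) :=
    fun n => Measurable.apply_apply (by fun_prop) (by fun_prop)
  have : ∀ m n, Measurable fun γ : (RelCode × RelCode) × ((ℕ → ℕ) × (ℕ → ℕ)) =>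
      γ.1.2 (γ.2.1 m, γ.2.1 n) :=
    fun m n => Measurable.apply_apply (by fun_prop) (by fun_prop)
  unfold IsoWitness
  measurability

theorem fst_image_isoWitness : Prod.fst '' IsoWitness =
    {p : RelCode × RelCode | IsLinearOrder ℕ (relOf p.1) ∧ OrderIsoCodes p.1 p.2} := by
  ext ⟨X, Y⟩
  simp only [IsoWitness, mem_image, mem_ofPred_eq, Prod.exists, Prod.mk.injEq]
  constructor
  · rintro ⟨_, _, u, v, ⟨hLO, hvu, huv, hXY⟩, rfl, rfl⟩
    exact ⟨hLO, ⟨u, v, hvu, huv⟩, fun m n => by simp [relOf, hXY]⟩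
  · rintro ⟨hLO, e, he⟩
    exact ⟨X, Y, e, e.symm, ⟨hLO, e.symm_apply_apply, e.apply_symm_apply,
      fun m n => Bool.eq_iff_iff.2 (he m n)⟩, rfl, rfl⟩

theorem eomega1_eq_union : Eomega1 = {X | ¬ CodesWO X} ×ˢ {X | ¬ CodesWO X} ∪
    {p : RelCode × RelCode | IsLinearOrder ℕ (relOf p.1) ∧ OrderIsoCodes p.1 p.2} := by
  ext ⟨X, Y⟩
  simp only [Eomega1, mem_union, mem_prod, mem_ofPred_eq]
  constructor
  · rintro (h | ⟨hX, -, hXY⟩)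
    · exact Or.inl h
    · exact Or.inr ⟨hX.1, hXY⟩
  · rintro (h | ⟨hLO, hXY⟩)
    · exact Or.inl h
    · by_cases hX : CodesWO X
      · exact Or.inr ⟨hX, hX.of_orderIsoCodes hXY, hXY⟩
      · exact Or.inl ⟨hX, fun hY => hX (hY.of_orderIsoCodes hXY.symm)⟩

theorem analyticSet_eomega1 : AnalyticSet Eomega1 := by
  rw [eomega1_eq_union, ← fst_image_notWOWitness, ← prodMap_image_prod, ← fst_image_isoWitness]
  exact ((measurableSet_notWOWitness.prod measurableSet_notWOWitness).analyticSet_image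
    (measurable_fst.prodMap measurable_fst)).union
    (measurableSet_isoWitness.analyticSet_image measurable_fst)

/-- `E_{ω₁}` is an equivalence relation, it is an analytic subset of
`((ℕ × ℕ) → Bool) × ((ℕ × ℕ) → Bool)`, and its quotient has cardinality exactly `ℵ₁`. -/
theorem statement14 :
    (Equivalence fun X Y : RelCode => (X, Y) ∈ Eomega1) ∧
    AnalyticSet Eomega1 ∧
    Cardinal.mk (Quot fun X Y : RelCode => (X, Y) ∈ Eomega1) = Cardinal.aleph 1 := by
  have hE : (fun X Y : RelCode => (X, Y) ∈ Eomega1) = fun X Y => orderType X = orderType Y :=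
    funext₂ fun _ _ => propext orderType_eq_orderType_iff.symm
  refine ⟨hE ▸ ⟨fun _ => rfl, Eq.symm, Eq.trans⟩, analyticSet_eomega1, ?_⟩
  rw [hE, ← Cardinal.lift_inj.{0, 1}, lift_mk_quot_ker, mk_range_orderType]
  simp
end
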